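/- (Multivariate decoupling for low moments.) Let (Ω, μ) be a probability space, m ≥ 1, 0 < q ≤ 1, and for every m-tuple i = (i_1,…,i_m) of natural numbers with i_1 < ⋯ < i_m let f_i be a nonnegative measurable function on Ω^m, with only finitely many f_i nonzero. Then ∫_{Ω^ℕ} (∑_i f_i(x_{i_1},…,x_{i_m}))^q dx is equivalent, with constants depending only on m and q, to ∫_{(Ω^ℕ)^m} (∑_i f_i(y^{(1)}_{i_1},…,y^{(m)}_{i_m}))^q dy^{(1)}⋯dy^{(m)}, where y^{(1)},…,y^{(m)} are m independent variables each running through Ω^ℕ with the product measure. -/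
import Mathlib


open MeasureTheory
open scoped ENNReal

universe u

universe v

set_option linter.unusedSectionVars false
set_option linter.unusedVariables false
set_option linter.deprecated false





section Aux

variable {E : Type*} [mE : MeasurableSpace E]

lemma measurable_res (n : ℕ) : Measurable (fun x : ℕ → E => fun k : Fin n => x (k : ℕ)) :=
  measurable_pi_lambda _ fun _ => measurable_pi_apply _

lemma ext_marginals_nat (P Q : Measure (ℕ → E)) [IsProbabilityMeasure P] [IsProbabilityMeasure Q]
    (h : ∀ n, Measure.map (fun x : ℕ → E => fun k : Fin n => x (k : ℕ)) P
      = Measure.map (fun x : ℕ → E => fun k : Fin n => x (k : ℕ)) Q) : P = Q := by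
  set C : Set (Set (ℕ → E)) := {s | ∃ n, ∃ S : Set (Fin n → E), MeasurableSet S ∧
    s = (fun x : ℕ → E => fun k : Fin n => x (k : ℕ)) ⁻¹' S} with hCdef
  have hsub : ∀ (n n' : ℕ) (hnn : n ≤ n') (S : Set (Fin n → E)),
      (fun x : ℕ → E => fun k : Fin n => x (k : ℕ)) ⁻¹' S
      = (fun x : ℕ → E => fun k : Fin n' => x (k : ℕ)) ⁻¹'
        ((fun v : Fin n' → E => fun k : Fin n => v (Fin.castLE hnn k)) ⁻¹' S) := by
    intro n n' hnn S
    rfl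
  have hpi : IsPiSystem C := by
    rintro s ⟨n1, S1, hS1, rfl⟩ t ⟨n2, S2, hS2, rfl⟩ -
    refine ⟨max n1 n2,
      ((fun v : Fin (max n1 n2) → E => fun k : Fin n1 => v (Fin.castLE (le_max_left _ _) k)) ⁻¹' S1)
      ∩ ((fun v : Fin (max n1 n2) → E => fun k : Fin n2 => v (Fin.castLE (le_max_right _ _) k)) ⁻¹' S2),
      ?_, ?_⟩
    · exact ((measurable_pi_lambda _ fun _ => measurable_pi_apply _) hS1).inter
        ((measurable_pi_lambda _ fun _ => measurable_pi_apply _) hS2)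
    · rw [Set.preimage_inter, ← hsub n1 (max n1 n2) (le_max_left _ _) S1,
        ← hsub n2 (max n1 n2) (le_max_right _ _) S2]
  have hgen : (MeasurableSpace.pi : MeasurableSpace (ℕ → E)) = .generateFrom C := by
    apply le_antisymm
    · have hev : ∀ j : ℕ, @Measurable _ _ (.generateFrom C) _ (fun x : ℕ → E => x j) := by
        intro j
        have hres : @Measurable _ _ (.generateFrom C) _
            (fun x : ℕ → E => fun k : Fin (j+1) => x (k : ℕ)) := fun S hS =>
          MeasurableSpace.measurableSet_generateFrom ⟨j+1, S, hS, rfl⟩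
        exact (measurable_pi_apply (⟨j, Nat.lt_succ_self j⟩ : Fin (j+1))).comp hres
      have hid : @Measurable (ℕ → E) (ℕ → E) (.generateFrom C) MeasurableSpace.pi id :=
        (@measurable_pi_iff (ℕ → E) ℕ (fun _ => E) (.generateFrom C)
          (fun _ => mE) id).mpr hev
      exact fun s hs => hid hs
    · apply MeasurableSpace.generateFrom_le
      rintro s ⟨n, S, hS, rfl⟩
      exact measurable_res n hS
  refine ext_of_generate_finite C hgen hpi ?_ (by simp)
  rintro s ⟨n, S, hS, rfl⟩
  rw [← Measure.map_apply (measurable_res n) hS, ← Measure.map_apply (measurable_res n) hS, h n]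

end Aux


section Aux2

variable {E : Type*} [mE : MeasurableSpace E] {J : Type*} [Fintype J]

lemma measurable_res2 (n : ℕ) :
    Measurable (fun y : J → ℕ → E => fun p : J × Fin n => y p.1 (p.2 : ℕ)) :=
  measurable_pi_lambda _ fun p => (measurable_pi_apply (p.2 : ℕ)).comp (measurable_pi_apply p.1)

lemma ext_marginals_arr (P Q : Measure (J → ℕ → E)) [IsProbabilityMeasure P]
    [IsProbabilityMeasure Q]
    (h : ∀ n, Measure.map (fun y : J → ℕ → E => fun p : J × Fin n => y p.1 (p.2 : ℕ)) P
      = Measure.map (fun y : J → ℕ → E => fun p : J × Fin n => y p.1 (p.2 : ℕ)) Q) : P = Q := by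
  set C : Set (Set (J → ℕ → E)) := {s | ∃ n, ∃ S : Set (J × Fin n → E), MeasurableSet S ∧
    s = (fun y : J → ℕ → E => fun p : J × Fin n => y p.1 (p.2 : ℕ)) ⁻¹' S} with hCdef
  have hsub : ∀ (n n' : ℕ) (hnn : n ≤ n') (S : Set (J × Fin n → E)),
      (fun y : J → ℕ → E => fun p : J × Fin n => y p.1 (p.2 : ℕ)) ⁻¹' S
      = (fun y : J → ℕ → E => fun p : J × Fin n' => y p.1 (p.2 : ℕ)) ⁻¹'
        ((fun v : J × Fin n' → E => fun p : J × Fin n => v (p.1, Fin.castLE hnn p.2)) ⁻¹' S) := by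
    intro n n' hnn S
    rfl
  have hpi : IsPiSystem C := by
    rintro s ⟨n1, S1, hS1, rfl⟩ t ⟨n2, S2, hS2, rfl⟩ -
    refine ⟨max n1 n2,
      ((fun v : J × Fin (max n1 n2) → E =>
          fun p : J × Fin n1 => v (p.1, Fin.castLE (le_max_left _ _) p.2)) ⁻¹' S1)
      ∩ ((fun v : J × Fin (max n1 n2) → E =>
          fun p : J × Fin n2 => v (p.1, Fin.castLE (le_max_right _ _) p.2)) ⁻¹' S2),
      ?_, ?_⟩
    · exact ((measurable_pi_lambda _ fun _ => measurable_pi_apply _) hS1).inter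
        ((measurable_pi_lambda _ fun _ => measurable_pi_apply _) hS2)
    · rw [Set.preimage_inter, ← hsub n1 (max n1 n2) (le_max_left _ _) S1,
        ← hsub n2 (max n1 n2) (le_max_right _ _) S2]
  have hgen : (MeasurableSpace.pi : MeasurableSpace (J → ℕ → E)) = .generateFrom C := by
    apply le_antisymm
    · have hev : ∀ (k : J) (j : ℕ),
          @Measurable _ _ (.generateFrom C) _ (fun y : J → ℕ → E => y k j) := by
        intro k j
        have hres : @Measurable _ _ (.generateFrom C) _
            (fun y : J → ℕ → E => fun p : J × Fin (j+1) => y p.1 (p.2 : ℕ)) := fun S hS =>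
          MeasurableSpace.measurableSet_generateFrom ⟨j+1, S, hS, rfl⟩
        exact (measurable_pi_apply ((k, ⟨j, Nat.lt_succ_self j⟩) : J × Fin (j+1))).comp hres
      have hev2 : ∀ k : J, @Measurable _ _ (.generateFrom C) _ (fun y : J → ℕ → E => y k) :=
        fun k => (@measurable_pi_iff (J → ℕ → E) ℕ (fun _ => E) (.generateFrom C)
          (fun _ => mE) (fun y => y k)).mpr (hev k)
      have hid : @Measurable (J → ℕ → E) (J → ℕ → E) (.generateFrom C) MeasurableSpace.pi id :=
        (@measurable_pi_iff (J → ℕ → E) J (fun _ => ℕ → E) (.generateFrom C)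
          (fun _ => MeasurableSpace.pi) id).mpr hev2
      exact fun s hs => hid hs
    · apply MeasurableSpace.generateFrom_le
      rintro s ⟨n, S, hS, rfl⟩
      exact measurable_res2 n hS
  refine ext_of_generate_finite C hgen hpi ?_ (by simp)
  rintro s ⟨n, S, hS, rfl⟩
  rw [← Measure.map_apply (measurable_res2 n) hS, ← Measure.map_apply (measurable_res2 n) hS, h n]

/-- selecting distinct coordinates from a product measure yields a product measure -/
lemma map_pi_comp_inj {ι κ : Type*} [Fintype ι] [Fintype κ]
    (μ : Measure E) [IsProbabilityMeasure μ] (e : ι → κ) (he : Function.Injective e) :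
    Measure.map (fun a : κ → E => fun i => a (e i)) (Measure.pi fun _ : κ => μ)
      = Measure.pi fun _ : ι => μ := by
  classical
  refine (Measure.pi_eq fun s hs => ?_).symm
  rw [Measure.map_apply (measurable_pi_lambda (fun (a : κ → E) (i : ι) => a (e i))
    fun i => measurable_pi_apply (e i)) (MeasurableSet.univ_pi hs)]
  have hpre : (fun a : κ → E => fun i => a (e i)) ⁻¹' Set.univ.pi s
      = Set.univ.pi (fun k => ⋂ (i : ι) (_ : e i = k), s i) := by
    ext a
    simp only [Set.mem_preimage, Set.mem_univ_pi, Set.mem_iInter]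
    constructor
    · intro h k i hik
      subst hik; exact h i
    · intro h i
      exact h (e i) i rfl
  rw [hpre, Measure.pi_pi]
  have h1 : ∀ i : ι, (⋂ (i' : ι) (_ : e i' = e i), s i') = s i := by
    intro i
    ext x
    simp only [Set.mem_iInter]
    exact ⟨fun h => h i rfl, fun hx i' h' => by cases he h'; exact hx⟩
  have h2 : ∀ k ∉ Finset.image e Finset.univ, μ (⋂ (i : ι) (_ : e i = k), s i) = 1 := by
    intro k hk
    have : (⋂ (i : ι) (_ : e i = k), s i) = Set.univ := by
      ext x
      simp only [Set.mem_iInter, Set.mem_univ, iff_true]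
      intro i hik
      exact absurd (Finset.mem_image.mpr ⟨i, Finset.mem_univ i, hik⟩) (by exact hk ∘ (hik ▸ ·))
    rw [this]; exact measure_univ
  calc ∏ k : κ, μ (⋂ (i : ι) (_ : e i = k), s i)
      = ∏ k ∈ Finset.image e Finset.univ, μ (⋂ (i : ι) (_ : e i = k), s i) :=
        (Finset.prod_subset (Finset.subset_univ _) (fun k _ hk => h2 k hk)).symm
    _ = ∏ i : ι, μ (⋂ (i' : ι) (_ : e i' = e i), s i') :=
        Finset.prod_image (fun i _ j _ hij => he hij)
    _ = ∏ i : ι, μ (s i) := Finset.prod_congr rfl (fun i _ => by rw [h1 i])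

lemma map_uncurry_pi {ι₁ ι₂ : Type*} [Fintype ι₁] [Fintype ι₂]
    (μ : Measure E) [IsProbabilityMeasure μ] :
    Measure.map (fun b : ι₁ → ι₂ → E => fun p : ι₁ × ι₂ => b p.1 p.2)
      (Measure.pi fun _ : ι₁ => Measure.pi fun _ : ι₂ => μ) = Measure.pi fun _ : ι₁ × ι₂ => μ := by
  refine (Measure.pi_eq fun s hs => ?_).symm
  rw [Measure.map_apply (measurable_pi_lambda
    (fun (b : ι₁ → ι₂ → E) (p : ι₁ × ι₂) => b p.1 p.2)
    fun p => (measurable_pi_apply p.2).comp (measurable_pi_apply p.1))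
    (MeasurableSet.univ_pi hs)]
  have hpre : (fun b : ι₁ → ι₂ → E => fun p : ι₁ × ι₂ => b p.1 p.2) ⁻¹' Set.univ.pi s
      = Set.univ.pi fun k₁ => Set.univ.pi fun k₂ => s (k₁, k₂) := by
    ext b
    simp only [Set.mem_preimage, Set.mem_univ_pi]
    exact ⟨fun h k₁ k₂ => h (k₁, k₂), fun h p => h p.1 p.2⟩
  rw [hpre, Measure.pi_pi]
  simp_rw [Measure.pi_pi]
  rw [← Fintype.prod_prod_type']

lemma map_eval_pi' {ι : Type*} [Fintype ι] {α : ι → Type v} [∀ i, MeasurableSpace (α i)]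
    (μ : ∀ i, Measure (α i)) [∀ i, IsProbabilityMeasure (μ i)] (i : ι) :
    Measure.map (fun a : ∀ j, α j => a i) (Measure.pi μ) = μ i := by
  classical
  ext s hs
  rw [Measure.map_apply (measurable_pi_apply i) hs]
  have : (fun a : ∀ j, α j => a i) ⁻¹' s
      = Set.univ.pi (Function.update (fun j => (Set.univ : Set (α j))) i s) := Set.eval_preimage
  rw [this, Measure.pi_pi]
  rw [Finset.prod_eq_single i (fun j _ hj => by
    rw [Function.update_of_ne hj]; exact measure_univ) (fun hi => absurd (Finset.mem_univ i) hi)]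
  rw [Function.update_self]

end Aux2


section Aux3

lemma rpow_interp {a b q : ℝ} (ha : 0 ≤ a) (hab : a ≤ b) (hq0 : 0 < q) (hq1 : q ≤ 1) :
    a * b ^ (q - 1) ≤ a ^ q := by
  rcases eq_or_lt_of_le ha with h0 | h0
  · rw [← h0, Real.zero_rpow hq0.ne', zero_mul]
  · have hb : 0 < b := lt_of_lt_of_le h0 hab
    have h1 : a ^ q = a * a ^ (q - 1) := by
      have : a ^ q = a ^ ((1 : ℝ) + (q - 1)) := by norm_num
      rw [this, Real.rpow_add h0 1 (q - 1), Real.rpow_one]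
    rw [h1]
    exact mul_le_mul_of_nonneg_left (Real.rpow_le_rpow_of_nonpos h0 hab (by linarith)) ha

lemma self_mul_rpow {b q : ℝ} (hb : 0 ≤ b) (hq0 : 0 < q) : b * b ^ (q - 1) = b ^ q := by
  rcases eq_or_lt_of_le hb with h0 | h0
  · rw [← h0, Real.zero_rpow hq0.ne', zero_mul]
  · have h2 : b ^ (1 : ℝ) * b ^ (q - 1) = b ^ q := by
      rw [← Real.rpow_add h0]; norm_num
    rw [← h2, Real.rpow_one]

lemma core_avg {ι X : Type*} [Fintype X] (s : Finset ι) (g : ι → ℝ) (hg : ∀ i ∈ s, 0 ≤ g i)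
    (ind : X → ι → ℝ) (h01 : ∀ χ, ∀ i ∈ s, ind χ i = 0 ∨ ind χ i = 1)
    {M : ℝ} (hM : 0 ≤ M) (hcount : ∀ i ∈ s, M ≤ ∑ χ : X, ind χ i)
    {q : ℝ} (hq0 : 0 < q) (hq1 : q ≤ 1) :
    M * (∑ i ∈ s, g i) ^ q ≤ ∑ χ : X, (∑ i ∈ s, ind χ i * g i) ^ q := by
  set b := ∑ i ∈ s, g i with hb
  have hb0 : 0 ≤ b := Finset.sum_nonneg hg
  have ha0 : ∀ χ : X, 0 ≤ ∑ i ∈ s, ind χ i * g i := fun χ => Finset.sum_nonneg fun i hi =>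
    mul_nonneg (by rcases h01 χ i hi with h | h <;> simp [h]) (hg i hi)
  have hab : ∀ χ : X, (∑ i ∈ s, ind χ i * g i) ≤ b := fun χ =>
    Finset.sum_le_sum fun i hi => by
      rcases h01 χ i hi with h | h <;> simp [h, hg i hi]
  have h1 : M * b ≤ ∑ χ : X, ∑ i ∈ s, ind χ i * g i := by
    rw [Finset.sum_comm, hb, Finset.mul_sum]
    apply Finset.sum_le_sum
    intro i hi
    rw [← Finset.sum_mul]
    exact mul_le_mul_of_nonneg_right (hcount i hi) (hg i hi)
  calc M * b ^ q = M * b * b ^ (q - 1) := by rw [mul_assoc, self_mul_rpow hb0 hq0]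
    _ ≤ (∑ χ : X, ∑ i ∈ s, ind χ i * g i) * b ^ (q - 1) :=
        mul_le_mul_of_nonneg_right h1 (Real.rpow_nonneg hb0 _)
    _ = ∑ χ : X, (∑ i ∈ s, ind χ i * g i) * b ^ (q - 1) := by rw [Finset.sum_mul]
    _ ≤ ∑ χ : X, (∑ i ∈ s, ind χ i * g i) ^ q :=
        Finset.sum_le_sum fun χ _ => rpow_interp (ha0 χ) (hab χ) hq0 hq1

lemma count_colorings (N m : ℕ) (σ : Fin m → Fin N) (hσ : Function.Injective σ) :
    ((m : ℝ)) ^ (N - m) = ∑ χ : Fin N → Fin m, (if ∀ k, χ (σ k) = k then (1 : ℝ) else 0) := by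
  classical
  have hterm : ∀ χ : Fin N → Fin m, (if ∀ k, χ (σ k) = k then (1 : ℝ) else 0)
      = ∏ n : Fin N, (if ∀ k, σ k = n → χ n = k then (1 : ℝ) else 0) := by
    intro χ
    by_cases H : ∀ k, χ (σ k) = k
    · rw [if_pos H]
      symm
      apply Finset.prod_eq_one
      intro n _
      rw [if_pos]
      intro k hk
      rw [← hk]; exact H k
    · rw [if_neg H]
      push_neg at H
      obtain ⟨k, hk⟩ := H
      symm
      apply Finset.prod_eq_zero (Finset.mem_univ (σ k))
      rw [if_neg]
      intro HH
      exact hk (HH k rfl)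
  simp_rw [hterm]
  rw [← Fintype.piFinset_univ, ← Finset.prod_univ_sum (fun _ : Fin N => (Finset.univ : Finset (Fin m)))
    (fun n v => if ∀ k, σ k = n → v = k then (1 : ℝ) else 0)]
  have hsum : ∀ n : Fin N, (∑ v : Fin m, if ∀ k, σ k = n → v = k then (1 : ℝ) else 0)
      = if n ∈ Finset.image σ Finset.univ then 1 else (m : ℝ) := by
    intro n
    by_cases hn : n ∈ Finset.image σ Finset.univ
    · rw [if_pos hn]
      obtain ⟨k₀, -, rfl⟩ := Finset.mem_image.mp hn
      have : ∀ v : Fin m, (if ∀ k, σ k = σ k₀ → v = k then (1 : ℝ) else 0)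
          = if v = k₀ then 1 else 0 := by
        intro v
        apply if_congr _ rfl rfl
        constructor
        · intro h; exact h k₀ rfl
        · rintro rfl k hk; exact (hσ hk).symm
      simp_rw [this]
      rw [Finset.sum_ite_eq' Finset.univ k₀ (fun _ => (1:ℝ))]
      rw [if_pos (Finset.mem_univ k₀)]
    · rw [if_neg hn]
      have : ∀ v : Fin m, (if ∀ k, σ k = n → v = k then (1 : ℝ) else 0) = 1 := by
        intro v
        rw [if_pos]
        intro k hk
        exact absurd (Finset.mem_image.mpr ⟨k, Finset.mem_univ k, hk⟩) hn
      simp_rw [this]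
      rw [Finset.sum_const, Finset.card_univ, Fintype.card_fin, nsmul_eq_mul, mul_one]
  simp_rw [hsum]
  rw [Finset.prod_ite (fun _ => (1:ℝ)) (fun _ => (m:ℝ)), Finset.prod_const, Finset.prod_const,
    one_pow, one_mul]
  congr 1
  have hcard1 : (Finset.univ.filter (fun n : Fin N => n ∈ Finset.image σ Finset.univ)).card = m := by
    rw [Finset.filter_mem_eq_inter, Finset.univ_inter,
      Finset.card_image_of_injective _ hσ, Finset.card_univ, Fintype.card_fin]
  have := Finset.card_filter_add_card_filter_not
    (s := (Finset.univ : Finset (Fin N)))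
    (p := fun n : Fin N => n ∈ Finset.image σ Finset.univ)
  rw [hcard1, Finset.card_univ, Fintype.card_fin] at this
  omega

lemma avg_ofReal {X : Type*} [Fintype X] [Nonempty X] (a : X → ℝ) (ha : ∀ χ, 0 ≤ a χ)
    (c t : ℝ) (hc : 0 ≤ c) (ht : 0 ≤ t) (h : c * (Fintype.card X : ℝ) * t ≤ ∑ χ : X, a χ) :
    ENNReal.ofReal c * ENNReal.ofReal t
      ≤ (Fintype.card X : ℝ≥0∞)⁻¹ * ∑ χ : X, ENNReal.ofReal (a χ) := by
  have hcard : (0 : ℝ) < Fintype.card X := by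
    exact_mod_cast Fintype.card_pos
  rw [← ENNReal.ofReal_sum_of_nonneg (fun χ _ => ha χ), ← ENNReal.ofReal_mul hc]
  have hinv : (Fintype.card X : ℝ≥0∞)⁻¹ = ENNReal.ofReal ((Fintype.card X : ℝ)⁻¹) := by
    rw [ENNReal.ofReal_inv_of_pos hcard, ENNReal.ofReal_natCast]
  rw [hinv, ← ENNReal.ofReal_mul (by positivity)]
  apply ENNReal.ofReal_le_ofReal
  rw [inv_mul_eq_div, le_div_iff₀ hcard]
  nlinarith [h]

end Aux3
section Aux4

variable {Ω : Type u} [mΩ : MeasurableSpace Ω]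

/-- flat finite marginal of a finite power of `π` -/
lemma flat_marginal {J : Type*} [Fintype J] (μ : Measure Ω) [IsProbabilityMeasure μ]
    (π : Measure (ℕ → Ω)) [IsProbabilityMeasure π]
    (hmarg : ∀ n : ℕ, Measure.map (fun x : ℕ → Ω => fun k : Fin n => x k) π
      = Measure.pi fun _ : Fin n => μ) (n : ℕ) :
    Measure.map (fun y : J → ℕ → Ω => fun p : J × Fin n => y p.1 (p.2 : ℕ))
      (Measure.pi fun _ : J => π) = Measure.pi fun _ : J × Fin n => μ := by
  have h1 : Measure.map (fun y : J → ℕ → Ω => fun k : J => fun j : Fin n => y k (j : ℕ))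
      (Measure.pi fun _ : J => π) = Measure.pi fun _ : J => Measure.pi fun _ : Fin n => μ :=
    (measurePreserving_pi (fun _ : J => π) (fun _ : J => Measure.pi fun _ : Fin n => μ)
      (fun _ => ⟨measurable_res n, hmarg n⟩)).map_eq
  have h2 := map_uncurry_pi (ι₁ := J) (ι₂ := Fin n) (E := Ω) μ
  have hcomp : (fun y : J → ℕ → Ω => fun p : J × Fin n => y p.1 (p.2 : ℕ))
      = (fun b : J → Fin n → Ω => fun p : J × Fin n => b p.1 p.2)
        ∘ (fun y : J → ℕ → Ω => fun k : J => fun j : Fin n => y k (j : ℕ)) := rfl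
  rw [hcomp, ← Measure.map_map (measurable_pi_lambda
      (fun (b : J → Fin n → Ω) (p : J × Fin n) => b p.1 p.2)
      fun p => (measurable_pi_apply p.2).comp (measurable_pi_apply p.1))
    (measurable_pi_lambda (fun (y : J → ℕ → Ω) (k : J) => fun j : Fin n => y k (j : ℕ))
      fun k => (measurable_res n).comp (measurable_pi_apply k)), h1, h2]

lemma mapT (m : ℕ) (μ : Measure Ω) [IsProbabilityMeasure μ]
    (π : Measure (ℕ → Ω)) [IsProbabilityMeasure π]
    (hmarg : ∀ n : ℕ, Measure.map (fun x : ℕ → Ω => fun k : Fin n => x k) π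
      = Measure.pi fun _ : Fin n => μ) (χ : ℕ → Fin m) :
    Measure.map (fun y : Fin m → ℕ → Ω => fun n : ℕ => y (χ n) n)
      (Measure.pi fun _ : Fin m => π) = π := by
  have hT : Measurable (fun y : Fin m → ℕ → Ω => fun n : ℕ => y (χ n) n) :=
    measurable_pi_lambda _ fun n => (measurable_pi_apply n).comp (measurable_pi_apply (χ n))
  haveI : IsProbabilityMeasure (Measure.map (fun y : Fin m → ℕ → Ω => fun n : ℕ => y (χ n) n)
      (Measure.pi fun _ : Fin m => π)) := Measure.isProbabilityMeasure_map hT.aemeasurable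
  apply ext_marginals_nat
  intro n
  rw [hmarg n, Measure.map_map (measurable_res n) hT]
  have hcomp : ((fun x : ℕ → Ω => fun k : Fin n => x (k : ℕ))
        ∘ (fun y : Fin m → ℕ → Ω => fun n' : ℕ => y (χ n') n'))
      = (fun a : Fin m × Fin n → Ω => fun j : Fin n => a (χ (j : ℕ), j))
        ∘ (fun y : Fin m → ℕ → Ω => fun p : Fin m × Fin n => y p.1 (p.2 : ℕ)) := rfl
  rw [hcomp, ← Measure.map_map (measurable_pi_lambda
      (fun (a : Fin m × Fin n → Ω) (j : Fin n) => a (χ (j : ℕ), j))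
      fun j => measurable_pi_apply _) (measurable_res2 n),
    flat_marginal μ π hmarg n]
  exact map_pi_comp_inj μ (fun j : Fin n => (χ (j : ℕ), j))
    (fun j j' h => by simpa using congrArg Prod.snd h)

lemma mapV (m : ℕ) (μ : Measure Ω) [IsProbabilityMeasure μ]
    (π : Measure (ℕ → Ω)) [IsProbabilityMeasure π]
    (hmarg : ∀ n : ℕ, Measure.map (fun x : ℕ → Ω => fun k : Fin n => x k) π
      = Measure.pi fun _ : Fin n => μ) (χ : ℕ → Fin m) :
    Measure.map (fun a : Fin (m+1) → ℕ → Ω =>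
        fun (k : Fin m) (n : ℕ) => if χ n = k then a 0 n else a k.succ n)
      (Measure.pi fun _ : Fin (m+1) => π) = Measure.pi fun _ : Fin m => π := by
  have hV : Measurable (fun a : Fin (m+1) → ℕ → Ω =>
      fun (k : Fin m) (n : ℕ) => if χ n = k then a 0 n else a k.succ n) := by
    apply measurable_pi_lambda
    intro k
    apply measurable_pi_lambda
    intro n
    by_cases h : χ n = k
    · simp only [h, if_true]
      exact (measurable_pi_apply n).comp (measurable_pi_apply 0)
    · simp only [h, if_false]
      exact (measurable_pi_apply n).comp (measurable_pi_apply k.succ)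
  haveI : IsProbabilityMeasure (Measure.map (fun a : Fin (m+1) → ℕ → Ω =>
      fun (k : Fin m) (n : ℕ) => if χ n = k then a 0 n else a k.succ n)
      (Measure.pi fun _ : Fin (m+1) => π)) := Measure.isProbabilityMeasure_map hV.aemeasurable
  apply ext_marginals_arr
  intro n
  rw [Measure.map_map (measurable_res2 n) hV]
  set e : Fin m × Fin n → Fin (m+1) × Fin n :=
    fun p => (if χ (p.2 : ℕ) = p.1 then 0 else p.1.succ, p.2) with he_def
  have he : Function.Injective e := by
    rintro ⟨k, j⟩ ⟨k', j'⟩ h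
    have hj : j = j' := congrArg Prod.snd h
    subst hj
    have h1 := congrArg Prod.fst h
    simp only [he_def] at h1
    split_ifs at h1 with hc hc' hc'
    · exact Prod.ext (hc.symm.trans hc') rfl
    · exact absurd h1.symm (Fin.succ_ne_zero k')
    · exact absurd h1 (Fin.succ_ne_zero k)
    · exact Prod.ext (Fin.succ_injective _ h1) rfl
  have hcomp : ((fun y : Fin m → ℕ → Ω => fun p : Fin m × Fin n => y p.1 (p.2 : ℕ))
        ∘ (fun a : Fin (m+1) → ℕ → Ω =>
          fun (k : Fin m) (n' : ℕ) => if χ n' = k then a 0 n' else a k.succ n'))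
      = (fun b : Fin (m+1) × Fin n → Ω => fun p : Fin m × Fin n => b (e p))
        ∘ (fun a : Fin (m+1) → ℕ → Ω => fun p : Fin (m+1) × Fin n => a p.1 (p.2 : ℕ)) := by
    funext a
    funext p
    simp only [Function.comp_apply, he_def]
    by_cases h : χ (p.2 : ℕ) = p.1 <;> simp [h]
  rw [hcomp, ← Measure.map_map (measurable_pi_lambda
      (fun (b : Fin (m+1) × Fin n → Ω) (p : Fin m × Fin n) => b (e p))
      fun p => measurable_pi_apply _) (measurable_res2 n),
    flat_marginal μ π hmarg n, flat_marginal μ π hmarg n]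
  exact map_pi_comp_inj μ e he

end Aux4

/-- **Multivariate decoupling for low moments** (Corollary `multizinn` of the paper):
for `0 < q ≤ 1` and nonnegative functions `f i` on `Ω^m` indexed by increasing `m`-tuples
`i` of naturals (finitely many nonzero), the `q`-th moment of
`∑ i, f i (x_{i 0}, …, x_{i (m-1)})` over `Ω^ℕ` is equivalent, with constants depending
only on `m` and `q`, to its fully decoupled version over `(Ω^ℕ)^m`.
The infinite product measure `π` on `Ω^ℕ` is characterized by its finite marginals. -/
theorem multivariate_decoupling (m : ℕ) (hm : 1 ≤ m) (q : ℝ) (hq0 : 0 < q) (hq1 : q ≤ 1) :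
    ∃ c C : ℝ, 0 < c ∧ 0 < C ∧
      ∀ (Ω : Type u) [MeasurableSpace Ω] (μ : Measure Ω) [IsProbabilityMeasure μ]
        (π : Measure (ℕ → Ω)) [IsProbabilityMeasure π],
        (∀ n : ℕ, Measure.map (fun x : ℕ → Ω => fun k : Fin n => x k) π
            = Measure.pi fun _ : Fin n => μ) →
        ∀ f : (Fin m → ℕ) → (Fin m → Ω) → ℝ,
        (∀ i, Measurable (f i)) →
        (∀ i y, 0 ≤ f i y) →
        (∀ i, ¬ StrictMono i → f i = 0) →
        {i | f i ≠ 0}.Finite →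
        (ENNReal.ofReal c *
            (∫⁻ y : Fin m → ℕ → Ω,
              ENNReal.ofReal ((∑' i : Fin m → ℕ, f i fun k => y k (i k)) ^ q)
              ∂Measure.pi fun _ : Fin m => π)
          ≤ ∫⁻ x : ℕ → Ω,
              ENNReal.ofReal ((∑' i : Fin m → ℕ, f i fun k => x (i k)) ^ q) ∂π) ∧
        ((∫⁻ x : ℕ → Ω,
              ENNReal.ofReal ((∑' i : Fin m → ℕ, f i fun k => x (i k)) ^ q) ∂π)
          ≤ ENNReal.ofReal C *
            ∫⁻ y : Fin m → ℕ → Ω,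
              ENNReal.ofReal ((∑' i : Fin m → ℕ, f i fun k => y k (i k)) ^ q)
              ∂Measure.pi fun _ : Fin m => π) := by
  classical
  have hmR : (0 : ℝ) < (m : ℝ) := by exact_mod_cast hm
  have hmRp : (0 : ℝ) < (m : ℝ) ^ m := pow_pos hmR m
  set c : ℝ := ((m : ℝ) ^ m)⁻¹ with hc_def
  have hc0 : 0 < c := inv_pos.mpr hmRp
  refine ⟨c, (m : ℝ) ^ m, hc0, hmRp, ?_⟩
  intro Ω mΩ μ _ π _ hmarg f hfm hfnn hmono hfin
  set s := hfin.toFinset with hs_def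
  have hsmem : ∀ i, i ∈ s ↔ f i ≠ 0 := fun i => hfin.mem_toFinset
  have hstrict : ∀ i ∈ s, StrictMono i := fun i hi => by
    by_contra h
    exact ((hsmem i).mp hi) (hmono i h)
  set T0 := s.sup (fun i => Finset.univ.sup i) with hT0_def
  set N := m + T0 + 1 with hN_def
  have hNm : m ≤ N := by omega
  have hiN : ∀ i ∈ s, ∀ k : Fin m, i k < N := by
    intro i hi k
    have h1 : i k ≤ Finset.univ.sup i := Finset.le_sup (Finset.mem_univ k)
    have h2 : Finset.univ.sup i ≤ T0 := Finset.le_sup hi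
    omega
  have hd0 : (0 : ℕ) < m := hm
  haveI : Nonempty (Fin m) := ⟨⟨0, hd0⟩⟩
  set ec : (Fin N → Fin m) → ℕ → Fin m :=
    fun χ n => if h : n < N then χ ⟨n, h⟩ else ⟨0, hd0⟩ with hec
  set ind : (Fin N → Fin m) → (Fin m → ℕ) → ℝ :=
    fun χ i => if ∀ k : Fin m, ec χ (i k) = k then 1 else 0 with hind
  have hind01 : ∀ χ i, ind χ i = 0 ∨ ind χ i = 1 := fun χ i => by
    by_cases h : ∀ k : Fin m, ec χ (i k) = k <;> simp [hind, h]
  have hindnn : ∀ χ i, 0 ≤ ind χ i := fun χ i => by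
    rcases hind01 χ i with h | h <;> rw [h] <;> norm_num
  have hcount : ∀ i ∈ s, ((m : ℝ)) ^ (N - m) ≤ ∑ χ : Fin N → Fin m, ind χ i := by
    intro i hi
    have hinj : Function.Injective (fun k : Fin m => (⟨i k, hiN i hi k⟩ : Fin N)) := by
      intro k k' h
      exact (hstrict i hi).injective (by simpa using congrArg Fin.val h)
    rw [count_colorings N m (fun k => ⟨i k, hiN i hi k⟩) hinj]
    apply le_of_eq
    apply Finset.sum_congr rfl
    intro χ _
    simp only [hind, hec]
    apply if_congr _ rfl rfl
    apply forall_congr'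
    intro k
    rw [dif_pos (hiN i hi k)]
  -- the functions
  set G : ℝ → ℝ≥0∞ := fun t => ENNReal.ofReal (t ^ q) with hG
  have hGmeas : Measurable G := (measurable_id.pow measurable_const).ennreal_ofReal
  have hGmono : ∀ {t u : ℝ}, 0 ≤ t → t ≤ u → G t ≤ G u := fun ht htu =>
    ENNReal.ofReal_le_ofReal (Real.rpow_le_rpow ht htu hq0.le)
  set Sor : (ℕ → Ω) → ℝ := fun x => ∑ i ∈ s, f i fun k => x (i k) with hSor
  set Sde : (Fin m → ℕ → Ω) → ℝ := fun y => ∑ i ∈ s, f i fun k => y k (i k) with hSde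
  set Sc : (Fin N → Fin m) → (Fin m → ℕ → Ω) → ℝ :=
    fun χ y => ∑ i ∈ s, ind χ i * f i fun k => y k (i k) with hSc
  set Sc0 : (Fin N → Fin m) → (ℕ → Ω) → ℝ :=
    fun χ x => ∑ i ∈ s, ind χ i * f i fun k => x (i k) with hSc0
  have hSorm : Measurable Sor := Finset.measurable_sum s fun i _ =>
    (hfm i).comp (measurable_pi_lambda _ fun k => measurable_pi_apply (i k))
  have hSdem : Measurable Sde := Finset.measurable_sum s fun i _ =>
    (hfm i).comp (measurable_pi_lambda _ fun k =>
      (measurable_pi_apply (i k)).comp (measurable_pi_apply k))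
  have hScm : ∀ χ, Measurable (Sc χ) := fun χ => Finset.measurable_sum s fun i _ =>
    (((hfm i).comp (measurable_pi_lambda _ fun k =>
      (measurable_pi_apply (i k)).comp (measurable_pi_apply k))).const_mul (ind χ i))
  have hSc0m : ∀ χ, Measurable (Sc0 χ) := fun χ => Finset.measurable_sum s fun i _ =>
    (((hfm i).comp (measurable_pi_lambda _ fun k =>
      measurable_pi_apply (i k))).const_mul (ind χ i))
  have hSdenn : ∀ y, 0 ≤ Sde y := fun y => Finset.sum_nonneg fun i _ => hfnn i _
  have hSornn : ∀ x, 0 ≤ Sor x := fun x => Finset.sum_nonneg fun i _ => hfnn i _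
  have hScnn : ∀ χ y, 0 ≤ Sc χ y := fun χ y => Finset.sum_nonneg fun i _ =>
    mul_nonneg (hindnn χ i) (hfnn i _)
  have hSc0nn : ∀ χ x, 0 ≤ Sc0 χ x := fun χ x => Finset.sum_nonneg fun i _ =>
    mul_nonneg (hindnn χ i) (hfnn i _)
  -- tsum = finite sum
  have htsum1 : ∀ x : ℕ → Ω, (∑' i : Fin m → ℕ, f i fun k => x (i k)) = Sor x := fun x =>
    tsum_eq_sum fun i hi => by
      have h0 : f i = 0 := by
        by_contra h
        exact hi ((hsmem i).mpr h)
      rw [h0]; rfl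
  have htsum2 : ∀ y : Fin m → ℕ → Ω,
      (∑' i : Fin m → ℕ, f i fun k => y k (i k)) = Sde y := fun y =>
    tsum_eq_sum fun i hi => by
      have h0 : f i = 0 := by
        by_contra h
        exact hi ((hsmem i).mpr h)
      rw [h0]; rfl
  set Pi1 : Measure (Fin m → ℕ → Ω) := Measure.pi fun _ : Fin m => π with hPi1
  set Pi2 : Measure (Fin (m+1) → ℕ → Ω) := Measure.pi fun _ : Fin (m+1) => π with hPi2
  have hieq1 : (∫⁻ x : ℕ → Ω,
        ENNReal.ofReal ((∑' i : Fin m → ℕ, f i fun k => x (i k)) ^ q) ∂π)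
      = ∫⁻ x, G (Sor x) ∂π := lintegral_congr fun x => by rw [htsum1 x]
  have hieq2 : (∫⁻ y : Fin m → ℕ → Ω,
        ENNReal.ofReal ((∑' i : Fin m → ℕ, f i fun k => y k (i k)) ^ q) ∂Pi1)
      = ∫⁻ y, G (Sde y) ∂Pi1 := lintegral_congr fun y => by rw [htsum2 y]
  -- cardinality of the coloring space
  have hcardX : ((Fintype.card (Fin N → Fin m) : ℝ)) = (m : ℝ) ^ N := by
    rw [Fintype.card_fun, Fintype.card_fin, Fintype.card_fin]
    push_cast
    ring
  have hcK : c * (Fintype.card (Fin N → Fin m) : ℝ) = (m : ℝ) ^ (N - m) := by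
    rw [hcardX, hc_def]
    have : (m : ℝ) ^ N = (m : ℝ) ^ m * (m : ℝ) ^ (N - m) := by
      rw [← pow_add]
      congr 1
      omega
    rw [this, inv_mul_cancel_left₀ (ne_of_gt hmRp)]
  have hKne0 : ((Fintype.card (Fin N → Fin m) : ℝ≥0∞)) ≠ 0 := by
    simp only [ne_eq, Nat.cast_eq_zero]
    exact Fintype.card_ne_zero
  have hKnetop : ((Fintype.card (Fin N → Fin m) : ℝ≥0∞)) ≠ ⊤ := ENNReal.natCast_ne_top _
  -- key pointwise averaged inequality
  have hkey : ∀ g : (Fin m → ℕ) → ℝ, (∀ i ∈ s, 0 ≤ g i) →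
      ENNReal.ofReal c * G (∑ i ∈ s, g i)
        ≤ (Fintype.card (Fin N → Fin m) : ℝ≥0∞)⁻¹ *
          ∑ χ : Fin N → Fin m, G (∑ i ∈ s, ind χ i * g i) := by
    intro g hg
    simp only [hG]
    apply avg_ofReal (fun χ : Fin N → Fin m => (∑ i ∈ s, ind χ i * g i) ^ q)
      (fun χ => Real.rpow_nonneg (Finset.sum_nonneg fun i hi =>
        mul_nonneg (hindnn χ i) (hg i hi)) q)
      c ((∑ i ∈ s, g i) ^ q) hc0.le (Real.rpow_nonneg (Finset.sum_nonneg hg) q)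
    rw [hcK]
    exact core_avg s g hg ind (fun χ i _ => hind01 χ i) (by positivity) hcount hq0 hq1
  -- pointwise comparisons
  have hptw1 : ∀ (χ : Fin N → Fin m) (y : Fin m → ℕ → Ω),
      Sc χ y ≤ Sor (fun n => y (ec χ n) n) := by
    intro χ y
    simp only [hSc, hSor]
    apply Finset.sum_le_sum
    intro i hi
    by_cases h : ∀ k : Fin m, ec χ (i k) = k
    · have heq : (fun k => y k (i k)) = (fun k => y (ec χ (i k)) (i k)) := by
        funext k; rw [h k]
      rw [hind]
      simp only [if_pos h, one_mul]
      rw [heq]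
    · rw [hind]
      simp only [if_neg h, zero_mul]
      exact hfnn i _
  have hptw2 : ∀ (χ : Fin N → Fin m) (a : Fin (m+1) → ℕ → Ω),
      Sc0 χ (a 0) ≤ Sde (fun (k : Fin m) (n : ℕ) => if ec χ n = k then a 0 n else a k.succ n) := by
    intro χ a
    simp only [hSc0, hSde]
    apply Finset.sum_le_sum
    intro i hi
    by_cases h : ∀ k : Fin m, ec χ (i k) = k
    · have heq : (fun k : Fin m => if ec χ (i k) = k then a 0 (i k) else a k.succ (i k))
          = fun k : Fin m => a 0 (i k) := by
        funext k; rw [if_pos (h k)]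
      rw [hind]
      simp only [if_pos h, one_mul]
      rw [heq]
    · rw [hind]
      simp only [if_neg h, zero_mul]
      exact hfnn i _
  -- measurability of the transfer maps
  have hTmeas : ∀ χ : Fin N → Fin m,
      Measurable (fun y : Fin m → ℕ → Ω => fun n : ℕ => y (ec χ n) n) := fun χ =>
    measurable_pi_lambda _ fun n => (measurable_pi_apply n).comp (measurable_pi_apply (ec χ n))
  have hVmeas : ∀ χ : Fin N → Fin m,
      Measurable (fun a : Fin (m+1) → ℕ → Ω =>
        fun (k : Fin m) (n : ℕ) => if ec χ n = k then a 0 n else a k.succ n) := by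
    intro χ
    apply measurable_pi_lambda
    intro k
    apply measurable_pi_lambda
    intro n
    by_cases h : ec χ n = k
    · simp only [h, if_true]
      exact (measurable_pi_apply n).comp (measurable_pi_apply 0)
    · simp only [h, if_false]
      exact (measurable_pi_apply n).comp (measurable_pi_apply k.succ)
  -- direction 1
  have hmain1 : ENNReal.ofReal c * ∫⁻ y, G (Sde y) ∂Pi1 ≤ ∫⁻ x, G (Sor x) ∂π := by
    have step1 : ∀ χ : Fin N → Fin m, (∫⁻ x, G (Sor x) ∂π)
        = ∫⁻ y, G (Sor (fun n => y (ec χ n) n)) ∂Pi1 := by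
      intro χ
      rw [← mapT m μ π hmarg (ec χ), lintegral_map (show Measurable fun x => G (Sor x) from hGmeas.comp hSorm) (hTmeas χ)]
    calc ENNReal.ofReal c * ∫⁻ y, G (Sde y) ∂Pi1
        = ∫⁻ y, ENNReal.ofReal c * G (Sde y) ∂Pi1 :=
          (lintegral_const_mul' _ _ ENNReal.ofReal_ne_top).symm
      _ ≤ ∫⁻ y, (Fintype.card (Fin N → Fin m) : ℝ≥0∞)⁻¹ *
            ∑ χ : Fin N → Fin m, G (Sc χ y) ∂Pi1 := by
          apply lintegral_mono
          intro y
          have := hkey (fun i => f i fun k => y k (i k)) (fun i _ => hfnn i _)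
          simpa [hSde, hSc] using this
      _ = (Fintype.card (Fin N → Fin m) : ℝ≥0∞)⁻¹ *
            ∑ χ : Fin N → Fin m, ∫⁻ y, G (Sc χ y) ∂Pi1 := by
          rw [lintegral_const_mul' _ _ (ENNReal.inv_ne_top.mpr hKne0)]
          congr 1
          exact lintegral_finset_sum _ fun χ _ => hGmeas.comp (hScm χ)
      _ ≤ (Fintype.card (Fin N → Fin m) : ℝ≥0∞)⁻¹ *
            ∑ χ : Fin N → Fin m, ∫⁻ y, G (Sor fun n => y (ec χ n) n) ∂Pi1 := by
          apply mul_le_mul_right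
          apply Finset.sum_le_sum
          intro χ _
          exact lintegral_mono fun y => hGmono (hScnn χ y) (hptw1 χ y)
      _ = (Fintype.card (Fin N → Fin m) : ℝ≥0∞)⁻¹ *
            ∑ _χ : Fin N → Fin m, ∫⁻ x, G (Sor x) ∂π := by
          congr 1
          exact Finset.sum_congr rfl fun χ _ => (step1 χ).symm
      _ = ∫⁻ x, G (Sor x) ∂π := by
          rw [Finset.sum_const, Finset.card_univ, nsmul_eq_mul, ← mul_assoc,
            ENNReal.inv_mul_cancel hKne0 hKnetop, one_mul]
  -- direction 2
  have hmain2 : ENNReal.ofReal c * ∫⁻ x, G (Sor x) ∂π ≤ ∫⁻ y, G (Sde y) ∂Pi1 := by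
    have step1' : ∀ χ : Fin N → Fin m, (∫⁻ y, G (Sde y) ∂Pi1)
        = ∫⁻ a, G (Sde fun (k : Fin m) (n : ℕ) =>
            if ec χ n = k then a 0 n else a k.succ n) ∂Pi2 := by
      intro χ
      rw [hPi1, hPi2, ← mapV m μ π hmarg (ec χ), lintegral_map (show Measurable fun y => G (Sde y) from hGmeas.comp hSdem) (hVmeas χ)]
    have step3 : ∀ χ : Fin N → Fin m, (∫⁻ a, G (Sc0 χ (a 0)) ∂Pi2)
        = ∫⁻ x, G (Sc0 χ x) ∂π := by
      intro χ
      have hev : Measure.map (fun a : Fin (m+1) → ℕ → Ω => a 0)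
          (Measure.pi fun _ : Fin (m+1) => π) = π := map_eval_pi' (fun _ : Fin (m+1) => π) 0
      rw [hPi2]
      conv_rhs => rw [← hev]
      rw [lintegral_map (show Measurable fun x => G (Sc0 χ x) from hGmeas.comp (hSc0m χ))
        (measurable_pi_apply 0)]
    calc ENNReal.ofReal c * ∫⁻ x, G (Sor x) ∂π
        = ∫⁻ x, ENNReal.ofReal c * G (Sor x) ∂π :=
          (lintegral_const_mul' _ _ ENNReal.ofReal_ne_top).symm
      _ ≤ ∫⁻ x, (Fintype.card (Fin N → Fin m) : ℝ≥0∞)⁻¹ *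
            ∑ χ : Fin N → Fin m, G (Sc0 χ x) ∂π := by
          apply lintegral_mono
          intro x
          have := hkey (fun i => f i fun k => x (i k)) (fun i _ => hfnn i _)
          simpa [hSor, hSc0] using this
      _ = (Fintype.card (Fin N → Fin m) : ℝ≥0∞)⁻¹ *
            ∑ χ : Fin N → Fin m, ∫⁻ x, G (Sc0 χ x) ∂π := by
          rw [lintegral_const_mul' _ _ (ENNReal.inv_ne_top.mpr hKne0)]
          congr 1
          exact lintegral_finset_sum _ fun χ _ => hGmeas.comp (hSc0m χ)
      _ = (Fintype.card (Fin N → Fin m) : ℝ≥0∞)⁻¹ *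
            ∑ χ : Fin N → Fin m, ∫⁻ a, G (Sc0 χ (a 0)) ∂Pi2 := by
          congr 1
          exact Finset.sum_congr rfl fun χ _ => (step3 χ).symm
      _ ≤ (Fintype.card (Fin N → Fin m) : ℝ≥0∞)⁻¹ *
            ∑ χ : Fin N → Fin m, ∫⁻ a, G (Sde fun (k : Fin m) (n : ℕ) =>
              if ec χ n = k then a 0 n else a k.succ n) ∂Pi2 := by
          apply mul_le_mul_right
          apply Finset.sum_le_sum
          intro χ _
          exact lintegral_mono fun a => hGmono (hSc0nn χ (a 0)) (hptw2 χ a)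
      _ = (Fintype.card (Fin N → Fin m) : ℝ≥0∞)⁻¹ *
            ∑ _χ : Fin N → Fin m, ∫⁻ y, G (Sde y) ∂Pi1 := by
          congr 1
          exact Finset.sum_congr rfl fun χ _ => (step1' χ).symm
      _ = ∫⁻ y, G (Sde y) ∂Pi1 := by
          rw [Finset.sum_const, Finset.card_univ, nsmul_eq_mul, ← mul_assoc,
            ENNReal.inv_mul_cancel hKne0 hKnetop, one_mul]
  constructor
  · rw [hieq1, hieq2]
    exact hmain1
  · rw [hieq1, hieq2]
    calc ∫⁻ x, G (Sor x) ∂π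
        = ENNReal.ofReal ((m : ℝ) ^ m) * (ENNReal.ofReal c * ∫⁻ x, G (Sor x) ∂π) := by
          rw [← mul_assoc, ← ENNReal.ofReal_mul hmRp.le, hc_def,
            mul_inv_cancel₀ (ne_of_gt hmRp), ENNReal.ofReal_one, one_mul]
      _ ≤ ENNReal.ofReal ((m : ℝ) ^ m) * ∫⁻ y, G (Sde y) ∂Pi1 :=
          mul_le_mul_right hmain2 _
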